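/- arXiv:2509.11001 — 2 statements merged into one kernel-verified Lean document; each statement's English description precedes it below -/
import Mathlib

section
/- Let n be a natural number with prime factorisation n = p_1^{α_1} ⋯ p_t^{α_t} (the p_i distinct primes). Then every skew brace of order n is a trivial brace (i.e., its additive group is abelian and a ∘ b = a + b for all a, b) if and only if α_i = 1 for every i and p_i does not divide p_j − 1 for all i ≠ j. -/
/-!
The arithmetic condition says exactly that `gcd(n, φ(n)) = 1`, and then every group of order `n`
is cyclic: `n` is squarefree, so `G` is a Z-group with cyclic commutator subgroup `G'`; since
`|Aut G'| = φ(|G'|)` divides `φ(n)`, conjugation fixes `G'` pointwise, and a central `G'` with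
cyclic `G / G'` makes `G` abelian, hence cyclic. For a skew brace `A` of order `n` the map
`a ↦ (b ↦ -a + a ∘ b)` is a homomorphism from `(A, ∘)` to `Aut (A, +)`, a group of order `φ(n)`,
so it is trivial, i.e. `a ∘ b = a + b`.

Conversely, if `d² ∣ n` then `a ∘ b = a + b + (n / d) a b` is a non-trivial brace on `ZMod n`, and
if `p ∣ q - 1` for primes `p, q` with `p ∣ n / q`, a non-abelian semidirect product
`C_q ⋊ C_(n/q)` is the additive group of a skew brace (with `∘ = +`).
-/

/-- A skew (left) brace: a set with two group structures `(A,+)` and `(A,∘)`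
(the latter written multiplicatively) satisfying
`a ∘ (b + c) = a ∘ b - a + a ∘ c`. -/
class SkewBrace (A : Type*) extends AddGroup A, Group A where
  skew_left_distrib : ∀ a b c : A, a * (b + c) = a * b - a + a * c

theorem Nat.squarefree_iff_factorization_eq_one {n : ℕ} (hn : n ≠ 0) :
    Squarefree n ↔ ∀ p ∈ n.primeFactors, n.factorization p = 1 := by
  rw [Nat.squarefree_iff_factorization_le_one hn]
  refine ⟨fun h p hp => le_antisymm (h p) ?_, fun h p => ?_⟩
  · rwa [Nat.one_le_iff_ne_zero, ← Finsupp.mem_support_iff, Nat.support_factorization]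
  · by_cases hp : p ∈ n.primeFactors
    · exact (h p hp).le
    · rw [← Nat.support_factorization, Finsupp.notMem_support_iff] at hp
      omega

theorem Nat.squarefree_of_coprime_totient {n : ℕ} (h : n.Coprime n.totient) : Squarefree n := by
  refine Nat.squarefree_iff_prime_squarefree.mpr fun p hp hpp => hp.one_lt.ne' ?_
  refine Nat.eq_one_of_dvd_coprimes h ((dvd_mul_right p p).trans hpp) ?_
  have : p ∣ (p ^ 2).totient := by
    rw [Nat.totient_prime_pow_succ hp 1, pow_one]
    exact dvd_mul_right _ _
  exact this.trans (Nat.totient_dvd_of_dvd (by rwa [sq]))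

theorem Nat.coprime_totient_of_squarefree {n : ℕ} (hsq : Squarefree n)
    (h : ∀ p ∈ n.primeFactors, ∀ q ∈ n.primeFactors, p ≠ q → ¬ p ∣ q - 1) :
    n.Coprime n.totient := by
  have hprod := Nat.prod_primeFactors_of_squarefree hsq
  have htot : n.totient = ∏ q ∈ n.primeFactors, (q - 1) := by
    rw [Nat.totient_eq_div_primeFactors_mul, hprod, Nat.div_self hsq.ne_zero.bot_lt, one_mul]
  rw [htot]
  nth_rw 1 [← hprod]
  refine Nat.Coprime.prod_left fun p hp => Nat.Coprime.prod_right fun q hq => ?_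
  have hp' := Nat.prime_of_mem_primeFactors hp
  rw [Nat.Prime.coprime_iff_not_dvd hp']
  rcases eq_or_ne p q with rfl | hpq
  · exact Nat.not_dvd_of_pos_of_lt (Nat.sub_pos_of_lt hp'.one_lt) (Nat.sub_lt hp'.pos one_pos)
  · exact h p hp q hq hpq

theorem MonoidHom.eq_one_of_coprime_card {G H : Type*} [Group G] [Group H] (f : G →* H)
    (h : (Nat.card G).Coprime (Nat.card H)) (g : G) : f g = 1 :=
  orderOf_eq_one_iff.mp <| Nat.eq_one_of_dvd_coprimes h
    ((orderOf_map_dvd f g).trans (orderOf_dvd_natCard g)) (orderOf_dvd_natCard _)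

theorem Subgroup.le_center_of_coprime_card_mulAut {G : Type*} [Group G] (N : Subgroup G)
    [N.Normal] (h : (Nat.card G).Coprime (Nat.card (MulAut N))) : N ≤ center G := by
  intro k hk
  rw [mem_center_iff]
  intro g
  have := congrArg Subtype.val <|
    DFunLike.congr_fun (MulAut.conjNormal.eq_one_of_coprime_card h g) ⟨k, hk⟩
  simpa [mul_inv_eq_iff_eq_mul] using this

open scoped IsMulCommutative in
theorem isCyclic_of_coprime_card_totient {G : Type*} [Group G] [Finite G]
    (h : (Nat.card G).Coprime (Nat.card G).totient) : IsCyclic G := by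
  have : IsZGroup G := IsZGroup.of_squarefree (Nat.squarefree_of_coprime_totient h)
  have := IsZGroup.isCyclic_commutator G
  have hcentral : commutator G ≤ Subgroup.center G := by
    refine (commutator G).le_center_of_coprime_card_mulAut ?_
    rw [IsCyclic.card_mulAut]
    exact h.coprime_dvd_right (Nat.totient_dvd_of_dvd (Subgroup.card_subgroup_dvd_card _))
  have : IsMulCommutative G := Abelianization.of.isMulCommutative_of_isCyclic_of_ker_le_center
    (by rwa [Abelianization.ker_of])
  exact IsCyclic.of_exponent_eq_card (IsZGroup.exponent_eq_card G)

section SkewBrace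

variable {A : Type*} [SkewBrace A]

theorem SkewBrace.mul_zero (a : A) : a * 0 = a := by
  have h := SkewBrace.skew_left_distrib a 0 0
  rw [add_zero, sub_eq_add_neg, add_assoc, left_eq_add, neg_add_eq_zero] at h
  exact h.symm

theorem SkewBrace.one_eq_zero : (1 : A) = 0 := by
  simpa using (SkewBrace.mul_zero (1 : A)).symm

theorem SkewBrace.mul_neg (a b : A) : a * -b = a - a * b + a := by
  have h := SkewBrace.skew_left_distrib a b (-b)
  rw [add_neg_cancel, SkewBrace.mul_zero, sub_eq_add_neg, add_assoc] at h
  rw [sub_eq_add_neg, add_assoc, ← neg_add_eq_iff_eq_add, eq_neg_add_iff_add_eq]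
  exact h.symm

/-- The brace axiom says exactly that each `lambda a` is additive. -/
def SkewBrace.lambda : A →* Multiplicative (AddAut A) where
  toFun a := .ofAdd
    { toFun b := -a + a * b
      invFun b := a⁻¹ * (a + b)
      left_inv b := by simp [← mul_assoc]
      right_inv b := by simp
      map_add' b c := by simp [SkewBrace.skew_left_distrib, sub_eq_add_neg, add_assoc] }
  map_one' := by
    ext b
    simp [SkewBrace.one_eq_zero]
  map_mul' a b := by
    ext c
    simp [SkewBrace.skew_left_distrib, SkewBrace.mul_neg, mul_assoc, sub_eq_add_neg, add_assoc]

theorem SkewBrace.lambda_apply (a b : A) : (lambda a).toAdd b = -a + a * b := rfl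

theorem SkewBrace.isTrivialBrace_of_coprime_totient [Finite A]
    (h : (Nat.card A).Coprime (Nat.card A).totient) :
    (∀ a b : A, a + b = b + a) ∧ ∀ a b : A, a * b = a + b := by
  have : IsCyclic (Multiplicative A) := isCyclic_of_coprime_card_totient h
  have hcard : Nat.card (Multiplicative (AddAut A)) = (Nat.card A).totient := by
    rw [← Nat.card_congr (MulAutMultiplicative A).toEquiv, IsCyclic.card_mulAut]
    rfl
  refine ⟨fun a b => IsCyclic.commGroup.mul_comm (Multiplicative.ofAdd a) (.ofAdd b),
    fun a b => ?_⟩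
  have hlambda := DFunLike.congr_fun (congrArg Multiplicative.toAdd
    (lambda.eq_one_of_coprime_card (hcard ▸ h) a)) b
  rwa [lambda_apply, neg_add_eq_iff_eq_add] at hlambda

end SkewBrace

/-- The circle operation of the square-zero ring `(R, +, (a, b) ↦ e a b)`. -/
abbrev SkewBrace.circle {R : Type*} [CommRing R] (e : R) (he : e * e = 0) : SkewBrace R :=
  { (inferInstance : AddGroup R) with
    mul a b := a + b + e * a * b
    one := 0
    inv a := -a + e * a ^ 2
    npow n a := @npowRec R ⟨0⟩ ⟨fun a b => a + b + e * a * b⟩ n a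
    npow_zero _ := rfl
    npow_succ _ _ := rfl
    mul_assoc a b c := by
      show (a + b + e * a * b) + c + e * (a + b + e * a * b) * c
        = a + (b + c + e * b * c) + e * a * (b + c + e * b * c)
      ring
    one_mul a := by show 0 + a + e * 0 * a = a; ring
    mul_one a := by show a + 0 + e * a * 0 = a; ring
    inv_mul_cancel a := by
      show (-a + e * a ^ 2) + a + e * (-a + e * a ^ 2) * a = 0
      linear_combination a ^ 3 * he
    skew_left_distrib a b c := by
      show a + (b + c) + e * a * (b + c) = (a + b + e * a * b) - a + (a + c + e * a * c)
      ring }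

/-- Both operations are the multiplication of `G`. -/
abbrev SkewBrace.ofGroup (G : Type*) [Group G] : SkewBrace G :=
  { (inferInstance : AddGroup (Additive G)), ‹Group G› with
    skew_left_distrib a b c := by
      show a * (b * c) = a * b / a * (a * c)
      rw [← mul_assoc (a * b / a), div_mul_cancel, mul_assoc] }

theorem exists_skewBrace_mul_ne_add_of_mul_self_dvd {d n : ℕ} (hd : 1 < d) (hdn : d * d ∣ n)
    (hn : n ≠ 0) :
    ∃ (A : Type) (_ : Finite A) (_ : SkewBrace A), Nat.card A = n ∧ ∃ a b : A, a * b ≠ a + b := by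
  obtain ⟨k, rfl⟩ := hdn
  have hk : 0 < k := Nat.pos_of_ne_zero (right_ne_zero_of_mul hn)
  have : NeZero (d * d * k) := ⟨hn⟩
  let e : ZMod (d * d * k) := (d * k : ℕ)
  have he : e * e = 0 := by
    rw [← Nat.cast_mul, ZMod.natCast_eq_zero_iff]
    exact ⟨k, by ring⟩
  have he0 : e ≠ 0 := by
    rw [Ne, ZMod.natCast_eq_zero_iff]
    refine Nat.not_dvd_of_pos_of_lt (by positivity) ?_
    nlinarith [mul_lt_mul_of_pos_right hd (Nat.mul_pos (by omega : 0 < d) hk)]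
  refine ⟨ZMod (d * d * k), inferInstance, SkewBrace.circle e he, Nat.card_zmod _, 1, 1, ?_⟩
  show 1 + 1 + e * 1 * 1 ≠ 1 + 1
  simpa using he0

theorem SemidirectProduct.not_commute_inl_inr {N G : Type*} [Group N] [Group G]
    {φ : G →* MulAut N} {n : N} {g : G} (h : φ g n ≠ n) :
    ¬ Commute (inl n : N ⋊[φ] G) (inr g) := by
  intro hc
  apply h
  rw [← inl_inj (φ := φ), inl_aut, ← hc.eq, map_inv, mul_inv_cancel_right]

theorem exists_group_not_commute_of_dvd_sub_one {p q m : ℕ} [Fact p.Prime] [Fact q.Prime]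
    [NeZero m] (hpq : p ∣ q - 1) (hpm : p ∣ m) :
    ∃ (G : Type) (_ : Group G) (_ : Finite G), Nat.card G = q * m ∧ ∃ a b : G, ¬ Commute a b := by
  obtain ⟨c, hc⟩ := exists_prime_orderOf_dvd_card p (G := (ZMod q)ˣ) (by rwa [ZMod.card_units])
  obtain ⟨g, hg⟩ := IsCyclic.exists_generator (α := Multiplicative (ZMod m))
  have hcg : orderOf c ∣ orderOf g := by
    rwa [hc, orderOf_eq_card_of_forall_mem_zpowers hg, Nat.card_eq_fintype_card,
      Fintype.card_multiplicative, ZMod.card]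
  let act : (ZMod q)ˣ →* MulAut (Multiplicative (ZMod q)) :=
    (MulAutMultiplicative (ZMod q)).symm.toMonoidHom.comp (DistribMulAction.toAddAut _ _)
  let φ := act.comp (monoidHomOfForallMemZpowers hg hcg)
  have hφ : φ g (.ofAdd 1) = .ofAdd (c : ZMod q) := by
    simp [φ, act, Units.smul_def]
  have hc1 : c ≠ 1 := by
    rintro rfl
    exact (Fact.out : p.Prime).one_lt.ne (by simpa using hc)
  refine ⟨Multiplicative (ZMod q) ⋊[φ] Multiplicative (ZMod m), inferInstance,
    Finite.of_equiv _ SemidirectProduct.equivProd.symm, by simp [SemidirectProduct.card], _, _,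
    SemidirectProduct.not_commute_inl_inr (n := .ofAdd 1) (g := g) ?_⟩
  rw [hφ]
  exact fun h => hc1 (Units.val_eq_one.mp (Multiplicative.ofAdd.injective h))

/-- **Theorem A (1)⇔(2)**: every skew brace of order `n` is a trivial brace
(abelian additive group and `a ∘ b = a + b`) if and only if `n` is square-free
and `p ∤ q - 1` for all distinct primes `p, q` dividing `n`. -/
theorem every_skewBrace_is_trivial_brace_iff (n : ℕ) (hn : 0 < n) :
    (∀ (A : Type) [Fintype A] [SkewBrace A], Fintype.card A = n →
      ((∀ a b : A, a + b = b + a) ∧ (∀ a b : A, a * b = a + b))) ↔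
    ((∀ p ∈ n.primeFactors, n.factorization p = 1) ∧
      (∀ p ∈ n.primeFactors, ∀ q ∈ n.primeFactors, p ≠ q → ¬ p ∣ q - 1)) := by
  rw [← Nat.squarefree_iff_factorization_eq_one hn.ne']
  constructor
  · intro h
    refine ⟨Nat.squarefree_iff_prime_squarefree.mpr fun p hp hpp => ?_,
      fun p hp q hq hpq hdvd => ?_⟩
    · obtain ⟨A, _, _, hcard, a, b, hab⟩ :=
        exists_skewBrace_mul_ne_add_of_mul_self_dvd hp.one_lt hpp hn.ne'
      have := Fintype.ofFinite A
      exact hab ((h A (by rw [Fintype.card_eq_nat_card, hcard])).2 a b)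
    · have : Fact p.Prime := ⟨Nat.prime_of_mem_primeFactors hp⟩
      have : Fact q.Prime := ⟨Nat.prime_of_mem_primeFactors hq⟩
      obtain ⟨m, rfl⟩ := Nat.dvd_of_mem_primeFactors hq
      have : NeZero m := ⟨right_ne_zero_of_mul hn.ne'⟩
      have hpm : p ∣ m := ((Nat.coprime_primes Fact.out Fact.out).mpr hpq).dvd_of_dvd_mul_left
        (Nat.dvd_of_mem_primeFactors hp)
      obtain ⟨G, _, _, hcard, a, b, hab⟩ := exists_group_not_commute_of_dvd_sub_one hdvd hpm
      let _ := SkewBrace.ofGroup G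
      have := Fintype.ofFinite G
      exact hab ((h G (by rw [Fintype.card_eq_nat_card, hcard])).1 a b)
  · rintro ⟨hsq, hpq⟩ A _ _ rfl
    refine SkewBrace.isTrivialBrace_of_coprime_totient ?_
    rw [Nat.card_eq_fintype_card]
    exact Nat.coprime_totient_of_squarefree hsq hpq
end

section
/- Let B = (B,+) be an abelian group, C = (C,·) a group, and φ, ψ : C → Aut(B) group homomorphisms (write φ_c, ψ_c for the images of c). Define on B × C the operations (b_1,c_1) + (b_2,c_2) = (b_1 + φ_{c_1}(b_2), c_1c_2) and (φ_{c_1}(b_1), c_1) ∘ (φ_{c_2}(b_2), c_2) = (φ_{c_1c_2}(b_1 + ψ_{c_1}(b_2)), c_1c_2) for all b_1,b_2 ∈ B and c_1,c_2 ∈ C. Then (B × C, +, ∘) is a skew brace if and only if φ_c ψ_{c'} = ψ_{c'} φ_c for all c, c' ∈ C. -/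
/-- `(A, add, mul)` with the indicated identities and inverse maps is a skew
(left) brace: both operations are group operations and the skew left
distributivity `a ∘ (b + c) = a ∘ b - a + a ∘ c` holds. -/
def IsSkewBrace {A : Type*} (add : A → A → A) (zero : A) (neg : A → A)
    (mul : A → A → A) (one : A) (inv : A → A) : Prop :=
  (∀ a b c : A, add (add a b) c = add a (add b c)) ∧
  (∀ a : A, add zero a = a) ∧ (∀ a : A, add a zero = a) ∧
  (∀ a : A, add (neg a) a = zero) ∧ (∀ a : A, add a (neg a) = zero) ∧
  (∀ a b c : A, mul (mul a b) c = mul a (mul b c)) ∧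
  (∀ a : A, mul one a = a) ∧ (∀ a : A, mul a one = a) ∧
  (∀ a : A, mul (inv a) a = one) ∧ (∀ a : A, mul a (inv a) = one) ∧
  (∀ a b c : A, mul a (add b c) = add (add (mul a b) (neg a)) (mul a c))

/-- The multiplicative group structure on `AddAut M` (composition), as in the older Mathlib. -/
instance addAutGroupOfComp {M : Type*} [Add M] : Group (AddAut M) where
  mul g h := AddEquiv.trans h g
  one := AddEquiv.refl _
  inv := AddEquiv.symm
  mul_assoc _ _ _ := rfl
  one_mul _ := rfl
  mul_one _ := rfl
  inv_mul_cancel := AddEquiv.self_trans_symm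

variable {B C : Type*} [AddCommGroup B] [Group C]

/-- The addition `(b₁,c₁) + (b₂,c₂) = (b₁ + φ_{c₁}(b₂), c₁c₂)` on `B × C`. -/
def sbAdd (φ : C →* AddAut B) : B × C → B × C → B × C :=
  fun p q => (p.1 + φ p.2 q.1, p.2 * q.2)

/-- The multiplication on `B × C` determined by
`(φ_{c₁}(b₁), c₁) ∘ (φ_{c₂}(b₂), c₂) = (φ_{c₁c₂}(b₁ + ψ_{c₁}(b₂)), c₁c₂)`. -/
def sbMul (φ ψ : C →* AddAut B) : B × C → B × C → B × C :=
  fun p q =>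
    (φ (p.2 * q.2) ((φ p.2).symm p.1 + ψ p.2 ((φ q.2).symm q.1)), p.2 * q.2)

/-! In the coordinates `(b, c) ↦ (φ_c⁻¹ b, c)` the operation `∘` is the semidirect product
`B ⋊_ψ C`, just as `+` is `B ⋊_φ C`; so both are group laws for any `φ, ψ`. Only skew left
distributivity involves the two actions together: it holds exactly when they commute, and
evaluating it at `(0, c')`, `(φ_c x, 1)`, `(0, c)` isolates `φ_c ψ_{c'} = ψ_{c'} φ_c`. -/

section GroupLaw

variable {A : Type*}

structure IsGroupLaw (mul : A → A → A) (one : A) (inv : A → A) : Prop where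
  assoc : ∀ a b c : A, mul (mul a b) c = mul a (mul b c)
  one_mul : ∀ a : A, mul one a = a
  mul_one : ∀ a : A, mul a one = a
  inv_mul : ∀ a : A, mul (inv a) a = one
  mul_inv : ∀ a : A, mul a (inv a) = one

theorem isSkewBrace_iff {add : A → A → A} {zero : A} {neg : A → A} {mul : A → A → A} {one : A}
    {inv : A → A} :
    IsSkewBrace add zero neg mul one inv ↔
      IsGroupLaw add zero neg ∧ IsGroupLaw mul one inv ∧
        ∀ a b c : A, mul a (add b c) = add (add (mul a b) (neg a)) (mul a c) := by
  constructor
  · rintro ⟨h₁, h₂, h₃, h₄, h₅, h₆, h₇, h₈, h₉, h₁₀, hdistrib⟩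
    exact ⟨⟨h₁, h₂, h₃, h₄, h₅⟩, ⟨h₆, h₇, h₈, h₉, h₁₀⟩, hdistrib⟩
  · rintro ⟨⟨h₁, h₂, h₃, h₄, h₅⟩, ⟨h₆, h₇, h₈, h₉, h₁₀⟩, hdistrib⟩
    exact ⟨h₁, h₂, h₃, h₄, h₅, h₆, h₇, h₈, h₉, h₁₀, hdistrib⟩

namespace IsGroupLaw

variable {mul : A → A → A} {one : A} {inv : A → A}

theorem one_eq_of_forall_mul_eq_self (h : IsGroupLaw mul one inv) {e : A}
    (he : ∀ a, mul a e = a) : one = e :=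
  (he one).symm.trans (h.one_mul e)

theorem inv_eq_of_mul_eq_one (h : IsGroupLaw mul one inv) {a b : A} (hab : mul a b = one) :
    inv a = b :=
  calc inv a = mul (inv a) (mul a b) := by rw [hab, h.mul_one]
    _ = b := by rw [← h.assoc, h.inv_mul, h.one_mul]

theorem transport {A' : Type*} (h : IsGroupLaw mul one inv) (e : A ≃ A') :
    IsGroupLaw (fun x y => e (mul (e.symm x) (e.symm y))) (e one) (fun x => e (inv (e.symm x))) where
  assoc a b c := by simp only [Equiv.symm_apply_apply, h.assoc]
  one_mul a := by simp only [Equiv.symm_apply_apply, h.one_mul, Equiv.apply_symm_apply]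
  mul_one a := by simp only [Equiv.symm_apply_apply, h.mul_one, Equiv.apply_symm_apply]
  inv_mul a := by simp only [Equiv.symm_apply_apply, h.inv_mul]
  mul_inv a := by simp only [Equiv.symm_apply_apply, h.mul_inv]

end IsGroupLaw

end GroupLaw

namespace FirstConstruction

theorem addAut_mul_apply {M : Type*} [Add M] (e₁ e₂ : AddAut M) (m : M) :
    (e₁ * e₂) m = e₁ (e₂ m) :=
  rfl

theorem addAut_one_apply {M : Type*} [Add M] (m : M) : (1 : AddAut M) m = m :=
  rfl

section Action

variable {G M : Type*} [Group G] [Add M] (φ : G →* AddAut M) (g : G) (m : M)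

theorem symm_map_apply : (φ g).symm m = φ g⁻¹ m := by
  rw [map_inv]; rfl

theorem map_inv_apply_map_apply : φ g⁻¹ (φ g m) = m := by
  rw [← symm_map_apply, AddEquiv.symm_apply_apply]

theorem map_apply_map_inv_apply : φ g (φ g⁻¹ m) = m := by
  rw [← symm_map_apply, AddEquiv.apply_symm_apply]

end Action

def sbNeg (φ : C →* AddAut B) (p : B × C) : B × C :=
  ((φ p.2).symm (-p.1), p.2⁻¹)

theorem isGroupLaw_sbAdd (φ : C →* AddAut B) : IsGroupLaw (sbAdd φ) (0, 1) (sbNeg φ) where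
  assoc a b c := by simp [sbAdd, map_mul, addAut_mul_apply, add_assoc, mul_assoc]
  one_mul a := by simp [sbAdd, map_one, addAut_one_apply]
  mul_one a := by simp [sbAdd]
  inv_mul a := by simp [sbAdd, sbNeg, symm_map_apply]
  mul_inv a := by simp [sbAdd, sbNeg]

def twist (φ : C →* AddAut B) : B × C ≃ B × C where
  toFun p := (φ p.2 p.1, p.2)
  invFun p := ((φ p.2).symm p.1, p.2)
  left_inv p := by simp
  right_inv p := by simp

theorem sbMul_eq_twist_sbAdd (φ ψ : C →* AddAut B) :
    sbMul φ ψ = fun p q => twist φ (sbAdd ψ ((twist φ).symm p) ((twist φ).symm q)) :=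
  rfl

theorem isGroupLaw_sbMul (φ ψ : C →* AddAut B) :
    IsGroupLaw (sbMul φ ψ) (twist φ (0, 1)) (fun p => twist φ (sbNeg ψ ((twist φ).symm p))) := by
  rw [sbMul_eq_twist_sbAdd]
  exact (isGroupLaw_sbAdd ψ).transport (twist φ)

theorem sbMul_sbAdd {φ ψ : C →* AddAut B}
    (hcomm : ∀ (c c' : C) (b : B), φ c (ψ c' b) = ψ c' (φ c b)) (a b c : B × C) :
    sbMul φ ψ a (sbAdd φ b c) = sbAdd φ (sbAdd φ (sbMul φ ψ a b) (sbNeg φ a)) (sbMul φ ψ a c) := by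
  refine Prod.ext ?_ (by simp [sbAdd, sbMul, sbNeg, mul_assoc])
  simp only [sbAdd, sbMul, sbNeg, symm_map_apply]
  simp only [mul_inv_rev, map_mul, addAut_mul_apply, map_add, map_neg, hcomm,
    map_inv_apply_map_apply, map_apply_map_inv_apply]
  abel

theorem commute_of_isSkewBrace {φ ψ : C →* AddAut B} {zero : B × C} {neg : B × C → B × C}
    {one : B × C} {inv : B × C → B × C}
    (h : IsSkewBrace (sbAdd φ) zero neg (sbMul φ ψ) one inv) (c c' : C) (b : B) :
    φ c (ψ c' b) = ψ c' (φ c b) := by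
  obtain ⟨hadd, -, hdistrib⟩ := isSkewBrace_iff.1 h
  have hzero : zero = (0, 1) := hadd.one_eq_of_forall_mul_eq_self (isGroupLaw_sbAdd φ).mul_one
  have hneg (x : C) : neg (0, x) = (0, x⁻¹) :=
    hadd.inv_eq_of_mul_eq_one (by simp [sbAdd, hzero])
  have key := congrArg Prod.fst (hdistrib (0, c') (φ c b, 1) (0, c))
  simp only [sbAdd, sbMul, hneg, symm_map_apply] at key
  simp only [inv_one, mul_one, one_mul, mul_inv_cancel, map_zero, add_zero, zero_add, map_mul,
    addAut_mul_apply, map_one, addAut_one_apply, map_inv_apply_map_apply] at key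
  exact (φ c').injective key

end FirstConstruction

open FirstConstruction in
/-- **Theorem 3.2 (first construction)**: `(B × C, +, ∘)` is a skew brace if
and only if `φ_c ψ_{c'} = ψ_{c'} φ_c` for all `c, c' ∈ C`. -/
theorem first_construction_isSkewBrace_iff (φ ψ : C →* AddAut B) :
    (∃ (zero : B × C) (neg : B × C → B × C) (one : B × C)
        (inv : B × C → B × C),
      IsSkewBrace (sbAdd φ) zero neg (sbMul φ ψ) one inv) ↔
    (∀ (c c' : C) (b : B), φ c (ψ c' b) = ψ c' (φ c b)) := by
  constructor
  · rintro ⟨_, _, _, _, h⟩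
    exact commute_of_isSkewBrace h
  · intro hcomm
    exact ⟨_, _, _, _, isSkewBrace_iff.2
      ⟨isGroupLaw_sbAdd φ, isGroupLaw_sbMul φ ψ, sbMul_sbAdd hcomm⟩⟩
end
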